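/- Let N ≥ 1 be an integer and Ω_sr, Ω_sp > 0, 0 < a₂ < 1. Let δ_sr be the maximum of N i.i.d. exponential random variables with mean Ω_sr and λ_sp an independent exponential random variable with mean Ω_sp. Then for every x ≥ 0, P( a₂δ_sr/λ_sp ≤ x ) = Σ_{k=1}^{N} (−1)^{k−1} C(N,k) · kΩ_sp x/(a₂Ω_sr + kΩ_sp x), where C(N,k) is the binomial coefficient. -/

import Mathlib

/-!
Conditionally on `λ_sp = z > 0`, the event `a₂ δ_sr / λ_sp ≤ x` is `δ_sr ≤ x z / a₂`, whose
probability is `(1 - e^{-b z})^N` with `b = x / (a₂ Ω_sr)`, by independence of the `N` exponentials.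
Expanding the power binomially and integrating term by term against the law of `λ_sp`, whose
Laplace transform is `E e^{-c λ_sp} = r / (r + c)` with `r = 1 / Ω_sp`, gives
`∑_{k=0}^N (-1)^k C(N,k) r / (r + k b)`. Since `∑_k (-1)^k C(N,k) = 0` for `N ≥ 1`, each
`r / (r + k b)` may be replaced by `r / (r + k b) - 1 = -k b / (r + k b)`, which is the stated form.
-/

open MeasureTheory Set ProbabilityTheory Real

lemma Finset.alternating_sum_range_choose_mul {R : Type*} [CommRing R] {N : ℕ} (hN : N ≠ 0)
    (f : ℕ → R) :
    ∑ k ∈ range (N + 1), (-1) ^ k * (N.choose k : R) * f k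
      = ∑ k ∈ Icc 1 N, (-1) ^ (k - 1) * (N.choose k : R) * (f 0 - f k) := by
  have hsum : ∑ k ∈ range (N + 1), (-1) ^ k * (N.choose k : R) = 0 := by
    have := congrArg (Int.cast : ℤ → R) (Int.alternating_sum_range_choose_of_ne hN)
    push_cast at this
    exact this
  calc ∑ k ∈ range (N + 1), (-1) ^ k * (N.choose k : R) * f k
      = ∑ k ∈ range (N + 1), (-1) ^ k * (N.choose k : R) * (f k - f 0) := by
        rw [← sub_zero (∑ k ∈ range (N + 1), _), ← zero_mul (f 0), ← hsum, sum_mul,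
          ← sum_sub_distrib]
        simp only [mul_sub]
    _ = ∑ k ∈ Icc 1 N, (-1) ^ (k - 1) * (N.choose k : R) * (f 0 - f k) := by
        rw [range_eq_Ico, sum_eq_sum_Ico_succ_bot N.succ_pos, sub_self, mul_zero, zero_add,
          zero_add, Nat.succ_eq_add_one, Ico_add_one_right_eq_Icc]
        refine sum_congr rfl fun k hk ↦ ?_
        obtain ⟨j, rfl⟩ : ∃ j, k = j + 1 := ⟨k - 1, by grind⟩
        rw [pow_succ, Nat.add_sub_cancel]
        ring

lemma Real.one_sub_exp_pow_eq_sum (b z : ℝ) (N : ℕ) :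
    (1 - exp (-(b * z))) ^ N
      = ∑ k ∈ Finset.range (N + 1), (-1) ^ k * (N.choose k : ℝ) * exp (-(k * b) * z) := by
  rw [sub_eq_neg_add, add_pow]
  refine Finset.sum_congr rfl fun k _ ↦ ?_
  rw [neg_pow, ← exp_nat_mul, one_pow, mul_one]
  ring_nf

namespace ProbabilityTheory

section Exponential

variable {r : ℝ}

lemma expMeasure_eq_withDensity (r : ℝ) :
    expMeasure r = volume.withDensity (exponentialPDF r) :=
  rfl

lemma expMeasure_Iic (hr : 0 < r) {t : ℝ} (ht : 0 ≤ t) :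
    expMeasure r (Iic t) = ENNReal.ofReal (1 - exp (-(r * t))) := by
  rw [expMeasure_eq_withDensity, withDensity_apply _ measurableSet_Iic,
    lintegral_exponentialPDF_eq_antiDeriv hr, if_pos ht]

lemma ae_pos_expMeasure (hr : 0 < r) : ∀ᵐ z ∂expMeasure r, 0 < z := by
  rw [ae_iff]
  simp only [not_lt]
  exact (expMeasure_Iic hr le_rfl).trans (by simp)

lemma mgf_id_expMeasure (hr : 0 < r) {t : ℝ} (ht : t < r) :
    mgf id (expMeasure r) t = r / (r - t) := by
  have hpdf (z : ℝ) : (exponentialPDF r z).toReal * exp (t * z)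
      = (Ici 0).indicator (fun z ↦ r * exp ((t - r) * z)) z := by
    rw [exponentialPDF_eq]
    by_cases hz : 0 ≤ z
    · rw [if_pos hz, indicator_of_mem (mem_Ici.2 hz), ENNReal.toReal_ofReal (by positivity),
        mul_assoc, ← exp_add]
      ring_nf
    · simp [hz]
  have hmeas : Measurable (exponentialPDF r) := (measurable_exponentialPDFReal r).ennreal_ofReal
  rw [mgf, expMeasure_eq_withDensity, integral_withDensity_eq_integral_toReal_smul hmeas
    (.of_forall fun _ ↦ ENNReal.ofReal_lt_top)]
  simp only [id, smul_eq_mul, hpdf]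
  rw [integral_indicator measurableSet_Ici, integral_Ici_eq_integral_Ioi, integral_const_mul,
    integral_exp_mul_Ioi (by linarith), mul_zero, exp_zero, neg_div, ← div_neg, neg_sub,
    mul_one_div]

lemma integrable_exp_mul_expMeasure (hr : 0 < r) {t : ℝ} (ht : t < r) :
    Integrable (fun z ↦ exp (t * z)) (expMeasure r) :=
  .of_integral_ne_zero <| by
    have hmgf := mgf_id_expMeasure hr ht
    rw [mgf] at hmgf
    exact hmgf ▸ (div_pos hr (sub_pos.2 ht)).ne'

lemma lintegral_one_sub_exp_pow_expMeasure (hr : 0 < r) {b : ℝ} (hb : 0 ≤ b) (N : ℕ) :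
    ∫⁻ z, ENNReal.ofReal ((1 - exp (-(b * z))) ^ N) ∂expMeasure r
      = ENNReal.ofReal
          (∑ k ∈ Finset.range (N + 1), (-1) ^ k * (N.choose k : ℝ) * (r / (r + k * b))) := by
  have hlt (k : ℕ) : -(k * b) < r := by nlinarith [k.cast_nonneg (α := ℝ)]
  have hint (k : ℕ) : Integrable (fun z ↦ exp (-(k * b) * z)) (expMeasure r) :=
    integrable_exp_mul_expMeasure hr (hlt k)
  have hnonneg : ∀ᵐ z ∂expMeasure r, 0 ≤ (1 - exp (-(b * z))) ^ N := by
    filter_upwards [ae_pos_expMeasure hr] with z hz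
    have : exp (-(b * z)) ≤ 1 := exp_le_one_iff.2 (by nlinarith)
    exact pow_nonneg (by linarith) N
  simp_rw [one_sub_exp_pow_eq_sum] at hnonneg ⊢
  rw [← ofReal_integral_eq_lintegral_ofReal
      (integrable_finsetSum _ fun k _ ↦ (hint k).const_mul _) hnonneg,
    integral_finsetSum _ fun k _ ↦ (hint k).const_mul _]
  refine congrArg ENNReal.ofReal (Finset.sum_congr rfl fun k _ ↦ ?_)
  have hmgf := mgf_id_expMeasure hr (hlt k)
  rw [mgf, sub_neg_eq_add] at hmgf
  rw [integral_const_mul, ← hmgf]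
  rfl

end Exponential

section Independence

variable {Ω : Type*} [MeasurableSpace Ω] {P : Measure Ω}

lemma iIndepFun.measure_iSup_le {ι β : Type*} [Fintype ι] [Nonempty ι]
    [ConditionallyCompleteLinearOrder β] [TopologicalSpace β] [OrderClosedTopology β]
    [MeasurableSpace β] [OpensMeasurableSpace β] {X : ι → Ω → β} (hX : iIndepFun X P) (t : β) :
    P {ω | ⨆ i, X i ω ≤ t} = ∏ i, P {ω | X i ω ≤ t} := by
  have hset : {ω | ⨆ i, X i ω ≤ t} = ⋂ i, X i ⁻¹' Iic t := by
    ext ω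
    simpa using ciSup_le_iff (finite_range fun i ↦ X i ω).bddAbove
  rw [hset]
  exact hX.meas_iInter fun i ↦ ⟨Iic t, measurableSet_Iic, rfl⟩

lemma iIndepFun.map_iSup_Iic_of_map_eq_expMeasure {ι : Type*} [Fintype ι] [Nonempty ι]
    {X : ι → Ω → ℝ} (hX_ind : iIndepFun X P) (hX : ∀ i, Measurable (X i)) {r : ℝ} (hr : 0 < r)
    (hX_law : ∀ i, P.map (X i) = expMeasure r) {t : ℝ} (ht : 0 ≤ t) :
    P.map (fun ω ↦ ⨆ i, X i ω) (Iic t)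
      = ENNReal.ofReal ((1 - exp (-(r * t))) ^ Fintype.card ι) := by
  have hX_cdf (i : ι) : P {ω | X i ω ≤ t} = ENNReal.ofReal (1 - exp (-(r * t))) := by
    rw [← expMeasure_Iic hr ht, ← hX_law i, Measure.map_apply (hX i) measurableSet_Iic]
    rfl
  have hnonneg : 0 ≤ 1 - exp (-(r * t)) :=
    sub_nonneg.2 (exp_le_one_iff.2 (neg_nonpos.2 (by positivity)))
  rw [Measure.map_apply (.iSup hX) measurableSet_Iic, ENNReal.ofReal_pow hnonneg]
  exact (hX_ind.measure_iSup_le t).trans (by simp only [hX_cdf, Finset.prod_const,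
    Finset.card_univ])

lemma iIndepFun.indepFun_sumElim_unit {ι β : Type*} [Fintype ι] [MeasurableSpace β]
    {X : ι → Ω → β} {Z : Ω → β} (h : iIndepFun (Sum.elim X fun _ : Unit ↦ Z) P)
    (hX : ∀ i, Measurable (X i)) (hZ : Measurable Z) :
    IndepFun (fun ω i ↦ X i ω) Z P := by
  classical
  let S : Finset (ι ⊕ Unit) := Finset.univ.map .inl
  have hS (i : ι) : Sum.inl i ∈ S := by simp [S]
  have hT : Sum.inr () ∈ ({Sum.inr ()} : Finset (ι ⊕ Unit)) := Finset.mem_singleton_self _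
  have hST : Disjoint S {Sum.inr ()} := by simp [S]
  refine (h.indepFun_finset S _ hST (Sum.forall.2 ⟨hX, fun _ ↦ hZ⟩)).comp
    (φ := fun v i ↦ v ⟨.inl i, hS i⟩) (ψ := fun v ↦ v ⟨.inr (), hT⟩) ?_ ?_ <;> fun_prop

lemma IndepFun.measure_mul_div_le_eq_lintegral [IsFiniteMeasure P] {Z W : Ω → ℝ}
    (hZW : IndepFun Z W P) (hZ : Measurable Z) (hW : Measurable W)
    (hZ_pos : ∀ᵐ z ∂P.map Z, 0 < z) {a : ℝ} (ha : 0 < a) (x : ℝ) :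
    P {ω | a * W ω / Z ω ≤ x} = ∫⁻ z, P.map W (Iic (x * z / a)) ∂P.map Z := by
  have hs : MeasurableSet {p : ℝ × ℝ | a * p.2 / p.1 ≤ x} :=
    measurableSet_le (by fun_prop) measurable_const
  rw [show {ω | a * W ω / Z ω ≤ x} = (fun ω ↦ (Z ω, W ω)) ⁻¹' {p | a * p.2 / p.1 ≤ x} from rfl,
    ← Measure.map_apply (hZ.prodMk hW) hs,
    (indepFun_iff_map_prod_eq_prod_map_map hZ.aemeasurable hW.aemeasurable).1 hZW,
    Measure.prod_apply hs]
  refine lintegral_congr_ae ?_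
  filter_upwards [hZ_pos] with z hz
  congr 1
  ext w
  simp only [mem_preimage, mem_ofPred_eq, mem_Iic]
  rw [div_le_iff₀ hz, le_div_iff₀ ha, mul_comm w]

end Independence

end ProbabilityTheory

theorem cdf_scaled_max_ratio_exponential_general
    {Ω : Type*} [MeasurableSpace Ω] (P : Measure Ω) [IsProbabilityMeasure P]
    (N : ℕ) (hN : 1 ≤ N)
    (Ωsr Ωsp a₂ : ℝ) (hΩsr : 0 < Ωsr) (hΩsp : 0 < Ωsp)
    (ha₂ : 0 < a₂)
    (X : Fin N → Ω → ℝ) (Z : Ω → ℝ)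
    (hX : ∀ i, Measurable (X i)) (hZ : Measurable Z)
    (hInd : iIndepFun
      (Sum.elim X (fun _ : Unit => Z)) P)
    (hXlaw : ∀ i, P.map (X i) = expMeasure (1 / Ωsr))
    (hZlaw : P.map Z = expMeasure (1 / Ωsp)) :
    ∀ x : ℝ, 0 ≤ x →
      P {ω | a₂ * (⨆ i, X i ω) / Z ω ≤ x}
        = ENNReal.ofReal
            (∑ k ∈ Finset.Icc 1 N, (-1 : ℝ) ^ (k - 1) * (N.choose k : ℝ) *
              ((k : ℝ) * Ωsp * x / (a₂ * Ωsr + (k : ℝ) * Ωsp * x))) := by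
  intro x hx
  have : Nonempty (Fin N) := ⟨⟨0, hN⟩⟩
  have hX_ind : iIndepFun X P := (hInd.precomp Sum.inl_injective :)
  have hZW : IndepFun Z (fun ω ↦ ⨆ i, X i ω) P :=
    (hInd.indepFun_sumElim_unit hX hZ).symm.comp measurable_id (.iSup measurable_pi_apply)
  have hZ_pos : ∀ᵐ z ∂P.map Z, 0 < z := hZlaw ▸ ae_pos_expMeasure (by positivity)
  rw [hZW.measure_mul_div_le_eq_lintegral hZ (.iSup hX) hZ_pos ha₂, hZlaw]
  calc _ = ∫⁻ z, ENNReal.ofReal ((1 - exp (-(x / (a₂ * Ωsr) * z))) ^ N) ∂expMeasure (1 / Ωsp) := by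
        refine lintegral_congr_ae ?_
        filter_upwards [ae_pos_expMeasure (r := 1 / Ωsp) (by positivity)] with z hz
        rw [hX_ind.map_iSup_Iic_of_map_eq_expMeasure hX (by positivity) hXlaw (by positivity),
          Fintype.card_fin]
        field_simp
    _ = _ := lintegral_one_sub_exp_pow_expMeasure (by positivity) (by positivity) N
    _ = _ := by
        rw [Finset.alternating_sum_range_choose_mul (by omega)]
        refine congrArg ENNReal.ofReal (Finset.sum_congr rfl fun k _ ↦ ?_)
        field_simp
        ring

/-- CDF of `a₂δ_sr/λ_sp`, where `δ_sr` is the maximum of `N` i.i.d. exponentials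
with mean `Ω_sr` and `λ_sp` is an independent exponential with mean `Ω_sp`. -/
theorem cdf_scaled_max_ratio_exponential
    {Ω : Type*} [MeasurableSpace Ω] (P : Measure Ω) [IsProbabilityMeasure P]
    (N : ℕ) (hN : 1 ≤ N)
    (Ωsr Ωsp a₂ : ℝ) (hΩsr : 0 < Ωsr) (hΩsp : 0 < Ωsp)
    (ha₂ : 0 < a₂) (ha₂' : a₂ < 1)
    (X : Fin N → Ω → ℝ) (Z : Ω → ℝ)
    (hX : ∀ i, Measurable (X i)) (hZ : Measurable Z)
    (hInd : iIndepFun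
      (Sum.elim X (fun _ : Unit => Z)) P)
    (hXlaw : ∀ i, P.map (X i) = expMeasure (1 / Ωsr))
    (hZlaw : P.map Z = expMeasure (1 / Ωsp)) :
    ∀ x : ℝ, 0 ≤ x →
      P {ω | a₂ * (⨆ i, X i ω) / Z ω ≤ x}
        = ENNReal.ofReal
            (∑ k ∈ Finset.Icc 1 N, (-1 : ℝ) ^ (k - 1) * (N.choose k : ℝ) *
              ((k : ℝ) * Ωsp * x / (a₂ * Ωsr + (k : ℝ) * Ωsp * x))) :=
  cdf_scaled_max_ratio_exponential_general P N hN Ωsr Ωsp a₂ hΩsr hΩsp ha₂ X Z hX hZ hInd hXlaw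
    hZlaw
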